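/- arXiv:1802.05390 — 2 statements merged into one kernel-verified Lean document; each statement's English description precedes it below -/
import Mathlib

section
/- For every λ ∈ (0,1) and every χ ∈ ℝ, the derivative f_λ' of f_λ satisfies χ · f_λ'(χ) ≥ χ⁴ − χ². -/
/-!
Write `f_λ = W + p_λ(χ) + p_λ(-χ)` with the double well `W(χ) = (χ² - 1)² / 4` and a penalty
`p_λ` that vanishes on `(-∞, 1]`, is a cubic on `[1, 1 + λ]` and a quadratic beyond; it is `C¹`
since at `1 + λ` both pieces have value `λ / 6` and slope `1 / 2`. Then
`χ f_λ'(χ) = χ⁴ - χ² + χ p_λ'(χ) + (-χ) p_λ'(-χ)`, and `t p_λ'(t) ≥ 0` for every `t` because `p_λ'` vanishes on `(-∞, 1]` and is nonnegative elsewhere.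
-/

/-- The smoothed double-well potential `f_λ`. -/
noncomputable def smoothPotential (l x : ℝ) : ℝ :=
  if 1 + l ≤ x then 1 / (2 * l) * (x - (1 + l / 2)) ^ 2 + 1 / 4 * (x ^ 2 - 1) ^ 2 + l / 24
  else if 1 < x then 1 / 4 * (x ^ 2 - 1) ^ 2 + 1 / (6 * l ^ 2) * (x - 1) ^ 3
  else if -1 ≤ x then 1 / 4 * (x ^ 2 - 1) ^ 2
  else if -1 - l < x then 1 / 4 * (x ^ 2 - 1) ^ 2 - 1 / (6 * l ^ 2) * (x + 1) ^ 3
  else 1 / (2 * l) * (x + (1 + l / 2)) ^ 2 + 1 / 4 * (x ^ 2 - 1) ^ 2 + l / 24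

open Set

theorem hasDerivAt_ite_le {f g f' g' : ℝ → ℝ} {a : ℝ} (hf : ∀ x, HasDerivAt f (f' x) x)
    (hg : ∀ x, HasDerivAt g (g' x) x) (hfg : f a = g a) (hfg' : f' a = g' a) (x : ℝ) :
    HasDerivAt (fun t => if t ≤ a then f t else g t) (if x ≤ a then f' x else g' x) x := by
  rcases lt_trichotomy x a with hx | rfl | hx
  · rw [if_pos hx.le]
    exact (hf x).congr_of_eventuallyEq ((eventually_lt_nhds hx).mono fun t ht => if_pos ht.le)
  · rw [if_pos le_rfl]
    have hleft : HasDerivWithinAt (fun t => if t ≤ x then f t else g t) (f' x) (Iic x) x :=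
      (hf x).hasDerivWithinAt.congr (fun t ht => if_pos ht) (if_pos le_rfl)
    have hright : HasDerivWithinAt (fun t => if t ≤ x then f t else g t) (f' x) (Ioi x) x := by
      rw [hfg']
      exact (hg x).hasDerivWithinAt.congr (fun t ht => if_neg (not_le.mpr ht))
        ((if_pos le_rfl).trans hfg)
    simpa only [Iic_union_Ioi, hasDerivWithinAt_univ] using hleft.union hright
  · rw [if_neg (not_le.mpr hx)]
    exact (hg x).congr_of_eventuallyEq
      ((eventually_gt_nhds hx).mono fun t ht => if_neg (not_le.mpr ht))

noncomputable def penalty (l t : ℝ) : ℝ :=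
  if t ≤ 1 then 0
  else if t ≤ 1 + l then 1 / (6 * l ^ 2) * (t - 1) ^ 3
  else 1 / (2 * l) * (t - (1 + l / 2)) ^ 2 + l / 24

noncomputable def penaltyDeriv (l t : ℝ) : ℝ :=
  if t ≤ 1 then 0
  else if t ≤ 1 + l then 1 / (2 * l ^ 2) * (t - 1) ^ 2
  else 1 / l * (t - (1 + l / 2))

theorem hasDerivAt_penalty {l : ℝ} (hl : 0 < l) (t : ℝ) :
    HasDerivAt (penalty l) (penaltyDeriv l t) t := by
  have hcubic (x : ℝ) : HasDerivAt (fun t => 1 / (6 * l ^ 2) * (t - 1) ^ 3)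
      (1 / (2 * l ^ 2) * (x - 1) ^ 2) x := by
    refine ((((hasDerivAt_id' x).sub_const 1).pow 3).const_mul (1 / (6 * l ^ 2))).congr_deriv ?_
    field_simp
    ring
  have hquad (x : ℝ) : HasDerivAt (fun t => 1 / (2 * l) * (t - (1 + l / 2)) ^ 2 + l / 24)
      (1 / l * (x - (1 + l / 2))) x := by
    refine (((((hasDerivAt_id' x).sub_const (1 + l / 2)).pow 2).const_mul
      (1 / (2 * l))).add_const (l / 24)).congr_deriv ?_
    field_simp
    ring
  have hglued (x : ℝ) : HasDerivAt (fun t => if t ≤ 1 + l then 1 / (6 * l ^ 2) * (t - 1) ^ 3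
      else 1 / (2 * l) * (t - (1 + l / 2)) ^ 2 + l / 24)
      (if x ≤ 1 + l then 1 / (2 * l ^ 2) * (x - 1) ^ 2 else 1 / l * (x - (1 + l / 2))) x :=
    hasDerivAt_ite_le hcubic hquad (by field_simp; ring) (by field_simp; ring) x
  exact hasDerivAt_ite_le (fun x => hasDerivAt_const x 0) hglued
    (by simp [hl.le]) (by simp [hl.le]) t

theorem mul_penaltyDeriv_nonneg {l : ℝ} (hl : 0 ≤ l) (t : ℝ) : 0 ≤ t * penaltyDeriv l t := by
  unfold penaltyDeriv
  split_ifs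
  · simp
  · exact mul_nonneg (by linarith) (by positivity)
  · exact mul_nonneg (by linarith) (mul_nonneg (by positivity) (by linarith))

theorem smoothPotential_eq_add_penalty {l : ℝ} (hl : 0 < l) (x : ℝ) :
    smoothPotential l x = 1 / 4 * (x ^ 2 - 1) ^ 2 + penalty l x + penalty l (-x) := by
  unfold smoothPotential penalty
  -- on the seams `x = ±(1 + λ)` the two sides use different pieces, which agree there
  split_ifs <;> first
    | linarith
    | (have hx : x = 1 + l := by linarith
       subst hx; field_simp; ring)
    | (have hx : x = -1 - l := by linarith
       subst hx; field_simp; ring)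

theorem mul_deriv_smoothPotential_ge (l : ℝ) (hl : l ∈ Set.Ioo (0 : ℝ) 1) (x : ℝ) :
    x * deriv (smoothPotential l) x ≥ x ^ 4 - x ^ 2 := by
  have hwell : HasDerivAt (fun x : ℝ => 1 / 4 * (x ^ 2 - 1) ^ 2) (x * (x ^ 2 - 1)) x := by
    refine ((((hasDerivAt_pow 2 x).sub_const 1).pow 2).const_mul (1 / 4 : ℝ)).congr_deriv ?_
    push_cast
    ring
  have hreflected : HasDerivAt (fun x => penalty l (-x)) (-penaltyDeriv l (-x)) x :=
    ((hasDerivAt_penalty hl.1 (-x)).comp x (hasDerivAt_neg x)).congr_deriv (mul_neg_one _)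
  have hderiv : HasDerivAt (smoothPotential l)
      (x * (x ^ 2 - 1) + penaltyDeriv l x + -penaltyDeriv l (-x)) x := by
    rw [funext (smoothPotential_eq_add_penalty hl.1)]
    exact (hwell.add (hasDerivAt_penalty hl.1 x)).add hreflected
  have hsplit : x * (x * (x ^ 2 - 1) + penaltyDeriv l x + -penaltyDeriv l (-x)) =
      x ^ 4 - x ^ 2 + x * penaltyDeriv l x + -x * penaltyDeriv l (-x) := by ring
  rw [hderiv.deriv, hsplit]
  linarith [mul_penaltyDeriv_nonneg hl.1.le x, mul_penaltyDeriv_nonneg hl.1.le (-x)]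
end

section
/- For every λ ∈ (0,1) and every χ ∈ ℝ, the derivative f_λ' of f_λ satisfies χ³ · f_λ'(χ) ≥ χ⁶ − χ⁴. -/
open Set Filter

theorem hasDerivAt_of_eqOn_Icc_of_eqOn_Icc {E : Type*} [NormedAddCommGroup E] [NormedSpace ℝ E]
    {f g h : ℝ → E} {a b c : ℝ} {D : E} (hba : b < a) (hac : a < c)
    (hfg : EqOn f g (Icc b a)) (hfh : EqOn f h (Icc a c))
    (hg : HasDerivAt g D a) (hh : HasDerivAt h D a) : HasDerivAt f D a := by
  have hleft := hg.hasDerivWithinAt.congr hfg (hfg ⟨hba.le, le_rfl⟩)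
  have hright := hh.hasDerivWithinAt.congr hfh (hfh ⟨le_rfl, hac.le⟩)
  refine (hleft.union hright).hasDerivAt ?_
  rw [Icc_union_Icc_eq_Icc hba.le hac.le]
  exact Icc_mem_nhds hba hac

theorem hasDerivAt_quartic (x : ℝ) :
    HasDerivAt (fun y : ℝ => 1 / 4 * (y ^ 2 - 1) ^ 2) (x * (x ^ 2 - 1)) x := by
  refine ((((hasDerivAt_pow 2 x).sub_const 1).fun_pow 2).const_mul (1 / 4 : ℝ)).congr_deriv ?_
  norm_num
  ring

namespace smoothPotential

variable {l : ℝ}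

noncomputable def correction (l x : ℝ) : ℝ :=
  if 1 + l ≤ x then (x - (1 + l / 2)) ^ 2 / (2 * l) + l / 24
  else if 1 < x then (x - 1) ^ 3 / (6 * l ^ 2)
  else if -1 ≤ x then 0
  else if -1 - l < x then -((x + 1) ^ 3 / (6 * l ^ 2))
  else (x + (1 + l / 2)) ^ 2 / (2 * l) + l / 24

noncomputable def correctionDeriv (l x : ℝ) : ℝ :=
  if 1 + l ≤ x then (x - (1 + l / 2)) / l
  else if 1 < x then (x - 1) ^ 2 / (2 * l ^ 2)
  else if -1 ≤ x then 0
  else if -1 - l < x then -((x + 1) ^ 2 / (2 * l ^ 2))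
  else (x + (1 + l / 2)) / l

theorem eq_add_correction (l x : ℝ) :
    smoothPotential l x = 1 / 4 * (x ^ 2 - 1) ^ 2 + correction l x := by
  unfold smoothPotential correction
  split_ifs <;> ring

theorem correction_neg (hl : 0 < l) (x : ℝ) : correction l (-x) = correction l x := by
  unfold correction
  split_ifs <;> first | ring1 | (exfalso; linarith)

theorem correctionDeriv_neg (hl : 0 < l) (x : ℝ) :
    correctionDeriv l (-x) = -correctionDeriv l x := by
  unfold correctionDeriv
  split_ifs <;> first | ring1 | (exfalso; linarith)

theorem mul_correctionDeriv_nonneg (hl : 0 < l) (x : ℝ) : 0 ≤ x * correctionDeriv l x := by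
  unfold correctionDeriv
  split_ifs
  · exact mul_nonneg (by linarith) (div_nonneg (by linarith) hl.le)
  · exact mul_nonneg (by linarith) (by positivity)
  · simp
  · rw [mul_neg, ← neg_mul]
    exact mul_nonneg (by linarith) (by positivity)
  · exact mul_nonneg_of_nonpos_of_nonpos (by linarith) (div_nonpos_of_nonpos_of_nonneg
      (by linarith) hl.le)

theorem correction_eqOn_Icc_neg_one_one (hl : 0 < l) : EqOn (correction l) 0 (Icc (-1) 1) := by
  intro y ⟨hy₁, hy₂⟩
  rw [correction, if_neg (by linarith), if_neg (by linarith), if_pos hy₁, Pi.zero_apply]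

theorem correction_eqOn_Icc_one (hl : 0 < l) :
    EqOn (correction l) (fun y => (y - 1) ^ 3 / (6 * l ^ 2)) (Icc 1 (1 + l)) := by
  intro y ⟨hy₁, hy₂⟩
  rcases hy₂.eq_or_lt with rfl | hy₂
  · rw [correction, if_pos le_rfl]
    field_simp
    ring
  rcases hy₁.eq_or_lt with rfl | hy₁
  · rw [correction, if_neg (by linarith), if_neg (lt_irrefl _), if_pos (by norm_num)]
    ring
  · rw [correction, if_neg (by linarith), if_pos hy₁]

theorem correction_eqOn_Ici :
    EqOn (correction l) (fun y => (y - (1 + l / 2)) ^ 2 / (2 * l) + l / 24) (Ici (1 + l)) :=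
  fun _ hy => if_pos hy

theorem hasDerivAt_cubic (x : ℝ) :
    HasDerivAt (fun y => (y - 1) ^ 3 / (6 * l ^ 2)) ((x - 1) ^ 2 / (2 * l ^ 2)) x := by
  refine ((((hasDerivAt_id' x).sub_const 1).fun_pow 3).div_const (6 * l ^ 2)).congr_deriv ?_
  norm_num
  ring

theorem hasDerivAt_quadratic (x : ℝ) :
    HasDerivAt (fun y => (y - (1 + l / 2)) ^ 2 / (2 * l) + l / 24) ((x - (1 + l / 2)) / l) x := by
  refine (((((hasDerivAt_id' x).sub_const (1 + l / 2)).fun_pow 2).div_const (2 * l)).add_const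
    (l / 24)).congr_deriv ?_
  norm_num
  ring

theorem hasDerivAt_correction_of_nonneg (hl : 0 < l) {x : ℝ} (hx : 0 ≤ x) :
    HasDerivAt (correction l) (correctionDeriv l x) x := by
  rcases lt_trichotomy x 1 with h₁ | rfl | h₁
  · rw [correctionDeriv, if_neg (by linarith), if_neg (by linarith), if_pos (by linarith)]
    exact (hasDerivAt_const x 0).congr_of_eventuallyEq
      (eventuallyEq_of_mem (Icc_mem_nhds (by linarith) h₁) (correction_eqOn_Icc_neg_one_one hl))
  · rw [correctionDeriv, if_neg (by linarith), if_neg (lt_irrefl _), if_pos (by norm_num)]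
    refine hasDerivAt_of_eqOn_Icc_of_eqOn_Icc (by norm_num) (by linarith)
      (correction_eqOn_Icc_neg_one_one hl) (correction_eqOn_Icc_one hl) (hasDerivAt_const _ _) ?_
    simpa using hasDerivAt_cubic (l := l) 1
  rcases lt_trichotomy x (1 + l) with h₂ | rfl | h₂
  · rw [correctionDeriv, if_neg (by linarith), if_pos h₁]
    exact (hasDerivAt_cubic x).congr_of_eventuallyEq
      (eventuallyEq_of_mem (Icc_mem_nhds h₁ h₂) (correction_eqOn_Icc_one hl))
  · rw [correctionDeriv, if_pos le_rfl]
    refine hasDerivAt_of_eqOn_Icc_of_eqOn_Icc h₁ (lt_add_one _) (correction_eqOn_Icc_one hl)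
      (correction_eqOn_Ici.mono Icc_subset_Ici_self) ?_ (hasDerivAt_quadratic _)
    -- both one-sided slopes at `1 + λ` equal `1 / 2`
    refine (hasDerivAt_cubic (1 + l)).congr_deriv ?_
    field_simp
    ring
  · rw [correctionDeriv, if_pos h₂.le]
    exact (hasDerivAt_quadratic x).congr_of_eventuallyEq
      (eventuallyEq_of_mem (Ici_mem_nhds h₂) correction_eqOn_Ici)

theorem hasDerivAt_correction (hl : 0 < l) (x : ℝ) :
    HasDerivAt (correction l) (correctionDeriv l x) x := by
  rcases le_total 0 x with hx | hx
  · exact hasDerivAt_correction_of_nonneg hl hx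
  have hneg := (hasDerivAt_correction_of_nonneg hl (neg_nonneg.2 hx)).comp x (hasDerivAt_neg' x)
  rwa [correctionDeriv_neg hl, mul_neg_one, neg_neg,
    show correction l ∘ Neg.neg = correction l from funext (correction_neg hl)] at hneg

theorem hasDerivAt (hl : 0 < l) (x : ℝ) :
    HasDerivAt (smoothPotential l) (x * (x ^ 2 - 1) + correctionDeriv l x) x := by
  rw [show smoothPotential l = _ from funext (eq_add_correction l)]
  exact (hasDerivAt_quartic x).add (hasDerivAt_correction hl x)

end smoothPotential

theorem cube_mul_deriv_smoothPotential_ge (l : ℝ) (hl : l ∈ Set.Ioo (0 : ℝ) 1) (x : ℝ) :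
    x ^ 3 * deriv (smoothPotential l) x ≥ x ^ 6 - x ^ 4 := by
  rw [(smoothPotential.hasDerivAt hl.1 x).deriv]
  have key := mul_nonneg (sq_nonneg x) (smoothPotential.mul_correctionDeriv_nonneg hl.1 x)
  linear_combination key
end
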